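/- arXiv:2104.13975 — 4 statements merged into one kernel-verified Lean document; each statement's English description precedes it below -/
import Mathlib

section
/- Let H be a Hilbert space, T a compact operator on H, A a bounded operator on H, and λ₀ a scalar. If there exists a unit vector x with ‖(T - λ₀A)x‖ = ‖T - λ₀A‖ and ⟨Tx, Ax⟩ = λ₀‖Ax‖², then λ₀A is a best approximation to T out of span{A}, i.e., ‖T - λ₀A‖ ≤ ‖T - λA‖ for all scalars λ. -/
/-- Sufficient condition for best approximation to a compact operator out of
the span of an operator, on a complex Hilbert space. -/
theorem best_approx_compact_operator_span
    {H : Type*} [NormedAddCommGroup H] [InnerProductSpace ℂ H] [CompleteSpace H]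
    (T A : H →L[ℂ] H) (hT : IsCompactOperator T) (l₀ : ℂ)
    (h : ∃ x : H, ‖x‖ = 1 ∧ ‖(T - l₀ • A) x‖ = ‖T - l₀ • A‖ ∧
      inner (𝕜 := ℂ) (A x) (T x) = l₀ * (‖A x‖ : ℂ) ^ 2) :
    ∀ l : ℂ, ‖T - l₀ • A‖ ≤ ‖T - l • A‖ := by
  obtain ⟨x, hx, hnorm, hinner⟩ := h
  intro l
  have hAB : inner (𝕜 := ℂ) (A x) ((T - l₀ • A) x) = 0 := by
    simp only [ContinuousLinearMap.sub_apply, ContinuousLinearMap.smul_apply,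
      inner_sub_right, inner_smul_right, hinner, inner_self_eq_norm_sq_to_K]
    exact sub_self _
  have hBA : inner (𝕜 := ℂ) ((T - l₀ • A) x) ((l₀ - l) • A x) = 0 := by
    rw [inner_smul_right, ← inner_conj_symm, hAB]
    simp
  have key : (T - l • A) x = (T - l₀ • A) x + (l₀ - l) • A x := by
    simp [ContinuousLinearMap.sub_apply, sub_smul]
  have hpyth := norm_add_sq_eq_norm_sq_add_norm_sq_of_inner_eq_zero _ _ hBA
  have h1 : ‖T - l₀ • A‖ ≤ ‖(T - l • A) x‖ := by
    rw [← hnorm, key]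
    nlinarith [norm_nonneg ((l₀ - l) • A x), norm_nonneg ((T - l₀ • A) x),
      norm_nonneg ((T - l₀ • A) x + (l₀ - l) • A x)]
  calc ‖T - l₀ • A‖ ≤ ‖(T - l • A) x‖ := h1
    _ ≤ ‖T - l • A‖ := by simpa [hx] using (T - l • A).le_opNorm x
end

section
/- Let X be a reflexive real Banach space and f, g ∈ X* linearly independent. If λ₀g is a best approximation to f out of span{g}, then there exists a unit vector x ∈ ker(g) with |(f - λ₀g)(x)| = ‖f - λ₀g‖; in particular dist(f, span{g}) = sup{|f(x)| : x ∈ ker(g), ‖x‖ = 1} = ‖f restricted to ker(g)‖. -/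
set_option maxHeartbeats 1000000 in
/-- If `l₀ g` is a best approximation to `f` out of `span{g}` in the dual of a
reflexive space, then the norm of `f - l₀ g` is attained at a unit vector of
`ker g`, and the distance formula holds. -/
theorem best_approx_functional_norm_attained
    {X : Type*} [NormedAddCommGroup X] [NormedSpace ℝ X] [CompleteSpace X]
    (hrefl : Function.Surjective (NormedSpace.inclusionInDoubleDual ℝ X))
    (f g : X →L[ℝ] ℝ) (hind : LinearIndependent ℝ ![f, g]) (l₀ : ℝ)
    (hbest : ∀ l : ℝ, ‖f - l₀ • g‖ ≤ ‖f - l • g‖) :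
    (∃ x : X, ‖x‖ = 1 ∧ g x = 0 ∧ |(f - l₀ • g) x| = ‖f - l₀ • g‖) ∧
      (⨅ l : ℝ, ‖f - l • g‖) =
        sSup {r : ℝ | ∃ x : X, ‖x‖ = 1 ∧ g x = 0 ∧ r = |f x|} := by
  obtain ⟨hg0, hnotmul⟩ := linearIndependent_fin2.mp hind
  simp only [Matrix.cons_val_zero, Matrix.cons_val_one, Matrix.head_cons] at hg0 hnotmul
  set h : X →L[ℝ] ℝ := f - l₀ • g with hh
  have hne : h ≠ 0 := fun h0 => hnotmul l₀ (sub_eq_zero.mp h0).symm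
  set S : Submodule ℝ (X →L[ℝ] ℝ) := ℝ ∙ g with hS
  have hSclosed : IsClosed (S : Set (X →L[ℝ] ℝ)) := Submodule.closed_of_finiteDimensional S
  -- the image of h in the quotient is nonzero
  have hmkne : (Submodule.Quotient.mk h : (X →L[ℝ] ℝ) ⧸ S) ≠ 0 := by
    rw [Ne, Submodule.Quotient.mk_eq_zero, Submodule.mem_span_singleton]
    rintro ⟨a, ha⟩
    refine hnotmul (l₀ + a) ?_
    have : a • g = f - l₀ • g := ha
    rw [add_smul]
    rw [this]
    abel
  -- the quotient norm of h equals ‖h‖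
  have hnorm_mk : ‖(Submodule.Quotient.mk h : (X →L[ℝ] ℝ) ⧸ S)‖ = ‖h‖ := by
    refine le_antisymm (Submodule.Quotient.norm_mk_le S h) ?_
    refine le_of_forall_pos_le_add fun ε hε => ?_
    obtain ⟨m, hm, hmlt⟩ := Submodule.Quotient.norm_mk_lt
      (Submodule.Quotient.mk h : (X →L[ℝ] ℝ) ⧸ S) hε
    rw [Submodule.Quotient.eq, Submodule.mem_span_singleton] at hm
    obtain ⟨a, ha⟩ := hm
    have hm' : m = f - (l₀ - a) • g := by
      have h2 : a • g = m - (f - l₀ • g) := ha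
      have : m = (f - l₀ • g) + a • g := by rw [h2]; abel
      rw [this, sub_smul l₀ a g]; abel
    calc ‖h‖ ≤ ‖m‖ := hm' ▸ hbest (l₀ - a)
    _ ≤ _ := hmlt.le
  obtain ⟨φ, hφ1, hφh⟩ := exists_dual_vector ℝ (Submodule.Quotient.mk h : (X →L[ℝ] ℝ) ⧸ S) (by rw [hnorm_mk]; exact norm_ne_zero_iff.mpr hne)
  -- build the double-dual element Ψ = φ ∘ mk
  set L : (X →L[ℝ] ℝ) →ₗ[ℝ] ℝ := φ.toLinearMap.comp S.mkQ with hL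
  have hLbound : ∀ u : X →L[ℝ] ℝ, ‖L u‖ ≤ 1 * ‖u‖ := by
    intro u
    calc ‖L u‖ = ‖φ (Submodule.Quotient.mk u)‖ := rfl
    _ ≤ ‖φ‖ * ‖(Submodule.Quotient.mk u : (X →L[ℝ] ℝ) ⧸ S)‖ := φ.le_opNorm _
    _ ≤ 1 * ‖u‖ := by rw [hφ1]; exact mul_le_mul_of_nonneg_left (Submodule.Quotient.norm_mk_le S u) zero_le_one
  set Ψ : StrongDual ℝ (StrongDual ℝ X) := L.mkContinuous 1 hLbound with hΨ
  obtain ⟨x, hx⟩ := hrefl Ψ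
  have hux : ∀ u : X →L[ℝ] ℝ, u x = φ (Submodule.Quotient.mk u) := by
    intro u
    rw [← NormedSpace.dual_def ℝ X x u, hx]
    rfl
  have hgx : g x = 0 := by
    rw [hux g]
    have : (Submodule.Quotient.mk g : (X →L[ℝ] ℝ) ⧸ S) = 0 :=
      (Submodule.Quotient.mk_eq_zero S).mpr (Submodule.mem_span_singleton_self g)
    rw [this, map_zero]
  have hhx : h x = ‖h‖ := by rw [hux h]; rw [hφh]; norm_num [hnorm_mk]
  have hhpos : 0 < ‖h‖ := norm_pos_iff.mpr hne
  have hxle : ‖x‖ ≤ 1 := by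
    refine NormedSpace.norm_le_dual_bound ℝ x zero_le_one fun u => ?_
    rw [hux u]
    calc ‖φ (Submodule.Quotient.mk u)‖ ≤ ‖φ‖ * ‖(Submodule.Quotient.mk u : (X →L[ℝ] ℝ) ⧸ S)‖ :=
          φ.le_opNorm _
    _ ≤ 1 * ‖u‖ := by
        rw [hφ1]
        exact mul_le_mul_of_nonneg_left (Submodule.Quotient.norm_mk_le S u) zero_le_one
  have hx1 : ‖x‖ = 1 := by
    refine le_antisymm hxle ?_
    have := h.le_opNorm x
    rw [hhx, Real.norm_eq_abs, abs_of_pos hhpos] at this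
    nlinarith
  have habs : |h x| = ‖h‖ := by rw [hhx, abs_of_pos hhpos]
  have hfx : |f x| = ‖h‖ := by
    have : f x = h x := by simp [hh, hgx]
    rw [this, habs]
  refine ⟨⟨x, hx1, hgx, habs⟩, ?_⟩
  -- the infimum equals ‖h‖
  have hinf : (⨅ l : ℝ, ‖f - l • g‖) = ‖h‖ := by
    refine le_antisymm (ciInf_le ⟨0, fun r ⟨l, hl⟩ => hl ▸ norm_nonneg _⟩ l₀) (le_ciInf hbest)
  rw [hinf]
  -- the sSup equals ‖h‖
  refine le_antisymm (le_csSup ⟨‖h‖, ?_⟩ ⟨x, hx1, hgx, hfx.symm⟩) (csSup_le ⟨|f x|, x, hx1, hgx, rfl⟩ ?_)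
  all_goals
    rintro r ⟨y, hy1, hgy, rfl⟩
    have : f y = h y := by simp [hh, hgy]
    rw [this, ← Real.norm_eq_abs]
    calc ‖h y‖ ≤ ‖h‖ * ‖y‖ := h.le_opNorm y
    _ = ‖h‖ := by rw [hy1, mul_one]
end

section
/- Let X be a finite-dimensional real normed space, f, g₁, …, gₙ ∈ X* with g₁,…,gₙ linearly independent and f ∉ Z = span{g₁,…,gₙ}, and suppose X is strictly convex and reflexive. If Σ αᵢgᵢ is a best approximation to f out of Z, then dist(f, Z) = max{|f(x)| : x ∈ ⋂ᵢ ker(gᵢ), ‖x‖ = 1}. -/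
set_option maxHeartbeats 800000
set_option synthInstance.maxHeartbeats 200000

/-- A continuous linear functional on a nontrivial finite-dimensional real
normed space attains its norm on the unit sphere. -/
lemma aux_norm_attained {E : Type*} [NormedAddCommGroup E] [NormedSpace ℝ E]
    [FiniteDimensional ℝ E] [Nontrivial E] (φ : E →L[ℝ] ℝ) :
    ∃ x : E, ‖x‖ = 1 ∧ |φ x| = ‖φ‖ := by
  obtain ⟨x₀, hx₀⟩ := exists_norm_eq E zero_le_one
  have hsph : (Metric.sphere (0:E) 1).Nonempty := ⟨x₀, by simpa using hx₀⟩
  have hcomp : IsCompact (Metric.sphere (0:E) 1) := isCompact_sphere 0 1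
  obtain ⟨x, hxmem, hmax⟩ := hcomp.exists_isMaxOn hsph
    (continuous_norm.comp φ.continuous).continuousOn
  have hx1 : ‖x‖ = 1 := by simpa using hxmem
  refine ⟨x, hx1, le_antisymm ?_ ?_⟩
  · calc |φ x| = ‖φ x‖ := (Real.norm_eq_abs _).symm
      _ ≤ ‖φ‖ * ‖x‖ := φ.le_opNorm x
      _ = ‖φ‖ := by rw [hx1, mul_one]
  · refine φ.opNorm_le_bound (abs_nonneg _) fun y => ?_
    rcases eq_or_ne y 0 with rfl | hy
    · simp
    · have hyn : ‖y‖ ≠ 0 := norm_ne_zero_iff.2 hy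
      have hmem : (‖y‖⁻¹ • y) ∈ Metric.sphere (0:E) 1 := by
        simp [norm_smul, abs_of_nonneg (norm_nonneg y), inv_mul_cancel₀ hyn]
      have := hmax hmem
      simp only [map_smul, norm_smul, Real.norm_eq_abs, smul_eq_mul] at this
      have h2 : |‖y‖⁻¹| * |φ y| ≤ |φ x| := by rw [← abs_mul]; simpa using this
      rw [abs_of_nonneg (inv_nonneg.2 (norm_nonneg y))] at h2
      calc ‖φ y‖ = |φ y| := Real.norm_eq_abs _
        _ = ‖y‖ * (‖y‖⁻¹ * |φ y|) := by field_simp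
        _ ≤ ‖y‖ * |φ x| := by
            exact mul_le_mul_of_nonneg_left h2 (norm_nonneg y)
        _ = |φ x| * ‖y‖ := mul_comm _ _

/-- Distance formula in the dual of a finite-dimensional strictly convex
(hence reflexive) real Banach space: if a best approximation exists, the
distance from `f` to `Z = span{g₁,…,gₙ}` is attained as a maximum of `|f x|`
over unit vectors in the common kernel. -/
theorem dist_functional_eq_max_on_common_kernel
    {X : Type*} [NormedAddCommGroup X] [NormedSpace ℝ X]
    [FiniteDimensional ℝ X] [StrictConvexSpace ℝ X]
    (n : ℕ) (f : X →L[ℝ] ℝ) (g : Fin n → (X →L[ℝ] ℝ))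
    (hind : LinearIndependent ℝ g)
    (hf : f ∉ Submodule.span ℝ (Set.range g)) (α : Fin n → ℝ)
    (hbest : ∀ h ∈ Submodule.span ℝ (Set.range g),
      ‖f - ∑ i, α i • g i‖ ≤ ‖f - h‖) :
    IsGreatest {r : ℝ | ∃ x : X, ‖x‖ = 1 ∧ (∀ i, g i x = 0) ∧ r = |f x|}
      (Metric.infDist f ((Submodule.span ℝ (Set.range g) : Submodule ℝ (X →L[ℝ] ℝ)) : Set (X →L[ℝ] ℝ))) := by
  set Z : Submodule ℝ (X →L[ℝ] ℝ) := Submodule.span ℝ (Set.range g) with hZ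
  have hZne : (Z : Set (X →L[ℝ] ℝ)).Nonempty := ⟨0, Z.zero_mem⟩
  -- Fact A: every h ∈ Z vanishes on the common kernel
  have factA : ∀ h ∈ Z, ∀ x : X, (∀ i, g i x = 0) → h x = 0 := by
    intro h hh x hx
    induction hh using Submodule.span_induction with
    | mem y hy => obtain ⟨i, rfl⟩ := hy; exact hx i
    | zero => simp
    | add a b _ _ ha hb => simp [ha, hb]
    | smul c a _ ha => simp [ha]
  -- upper bound part
  have hub : ∀ r ∈ {r : ℝ | ∃ x : X, ‖x‖ = 1 ∧ (∀ i, g i x = 0) ∧ r = |f x|},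
      r ≤ Metric.infDist f (Z : Set (X →L[ℝ] ℝ)) := by
    rintro r ⟨x, hx1, hxk, rfl⟩
    rw [← not_lt]
    intro hlt
    rw [Metric.infDist_lt_iff hZne] at hlt
    obtain ⟨h, hh, hd⟩ := hlt
    refine absurd hd (not_lt.2 ?_)
    have : f x = (f - h) x := by simp [factA h hh x hxk]
    calc |f x| = |(f - h) x| := by rw [this]
      _ = ‖(f - h) x‖ := (Real.norm_eq_abs _).symm
      _ ≤ ‖f - h‖ * ‖x‖ := (f - h).le_opNorm x
      _ = ‖f - h‖ := by rw [hx1, mul_one]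
      _ = dist f h := (dist_eq_norm f h).symm
    
  -- Common kernel
  set K : Submodule ℝ X := ⨅ i, LinearMap.ker (g i : X →ₗ[ℝ] ℝ) with hK
  have hmemK : ∀ x : X, x ∈ K ↔ ∀ i, g i x = 0 := by
    intro x; simp [hK, Submodule.mem_iInf, LinearMap.mem_ker]
  -- restriction of f to K
  set φ : K →L[ℝ] ℝ := f.comp (K.subtypeL) with hφ
  -- Hahn-Banach extension of φ
  obtain ⟨F, hFext, hFnorm⟩ := exists_extension_norm_eq K φ
  -- f - F vanishes on K, hence lies in Z
  have hfF : f - F ∈ Z := by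
    -- use mem_span_of_iInf_ker_le_ker on the algebraic level
    have hker : (⨅ i, LinearMap.ker ((g i : X →ₗ[ℝ] ℝ))) ≤
        LinearMap.ker ((f - F : X →L[ℝ] ℝ) : X →ₗ[ℝ] ℝ) := by
      intro x hx
      have hxK : x ∈ K := by
        rw [hmemK]
        intro i
        simpa using Submodule.mem_iInf _ |>.1 hx i
      have : F x = f x := by
        have := hFext ⟨x, hxK⟩
        simpa [hφ] using this
      simp [LinearMap.mem_ker, this]
    have hspan := mem_span_of_iInf_ker_le_ker (L := fun i => (g i : X →ₗ[ℝ] ℝ))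
      (K := ((f - F : X →L[ℝ] ℝ) : X →ₗ[ℝ] ℝ)) hker
    obtain ⟨c, hc⟩ := (Submodule.mem_span_range_iff_exists_fun ℝ).1 hspan
    have : (∑ i, c i • g i : X →L[ℝ] ℝ) = f - F := by
      ext x
      have := congrArg (fun (h : X →ₗ[ℝ] ℝ) => h x) hc
      simpa using this
    rw [← this]
    exact Submodule.sum_mem _ fun i _ =>
      Submodule.smul_mem _ _ (Submodule.subset_span ⟨i, rfl⟩)
  -- infDist ≤ ‖φ‖
  have hdle : Metric.infDist f (Z : Set (X →L[ℝ] ℝ)) ≤ ‖φ‖ := by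
    calc Metric.infDist f (Z : Set (X →L[ℝ] ℝ)) ≤ dist f (f - F) :=
          Metric.infDist_le_dist_of_mem hfF
      _ = ‖F‖ := by rw [dist_eq_norm]; simp
      _ = ‖φ‖ := hFnorm
  -- infDist > 0 since Z is closed and f ∉ Z
  have hZclosed : IsClosed (Z : Set (X →L[ℝ] ℝ)) :=
    Submodule.closed_of_finiteDimensional Z
  have hdpos : 0 < Metric.infDist f (Z : Set (X →L[ℝ] ℝ)) := by
    have hf' : f ∉ (Z : Set (X →L[ℝ] ℝ)) := hf
    exact (hZclosed.notMem_iff_infDist_pos hZne).1 hf'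
  -- hence φ ≠ 0, so K is nontrivial
  have hφpos : 0 < ‖φ‖ := lt_of_lt_of_le hdpos hdle
  have : Nontrivial K := by
    by_contra h
    have : Subsingleton K := not_nontrivial_iff_subsingleton.1 h
    have : φ = 0 := by ext x; rw [Subsingleton.elim x 0]; simp
    rw [this] at hφpos
    simp at hφpos
  -- attain the norm of φ
  obtain ⟨x, hx1, hxval⟩ := aux_norm_attained φ
  have hxk : ∀ i, g i (x : X) = 0 := (hmemK x).1 x.2
  have hmemset : ‖φ‖ ∈ {r : ℝ | ∃ y : X, ‖y‖ = 1 ∧ (∀ i, g i y = 0) ∧ r = |f y|} :=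
    ⟨x, hx1, hxk, by simp [hφ] at hxval ⊢; exact hxval.symm⟩
  have hle : ‖φ‖ ≤ Metric.infDist f (Z : Set (X →L[ℝ] ℝ)) := hub _ hmemset
  have heq : Metric.infDist f (Z : Set (X →L[ℝ] ℝ)) = ‖φ‖ := le_antisymm hdle hle
  constructor
  · rw [heq]; exact hmemset
  · exact hub
end

section
/- Let 1 < p < ∞ and q satisfy 1/p + 1/q = 1. Let (a,b) ∈ ℝ² with the ℓ_p norm, let (c,d) ≠ (0,0), and let Y = span{(c,d)}. Then the distance from (a,b) to Y in the ℓ_p norm equals |ad - bc| / (|c|^q + |d|^q)^{1/q}, i.e., inf_{t∈ℝ} (|a - tc|^p + |b - td|^p)^{1/p} = |ad - bc|/(|c|^q + |d|^q)^{1/q}. -/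
private lemma sign_mul_self_eq_abs (d : ℝ) : Real.sign d * d = |d| := by
  rcases lt_trichotomy d 0 with h | h | h
  · rw [Real.sign_of_neg h, abs_of_neg h]; ring
  · simp [h]
  · rw [Real.sign_of_pos h, abs_of_pos h]; ring

private lemma abs_sign_mul (d s : ℝ) (hs : d = 0 → s = 0) :
    |Real.sign d| * s = s := by
  rcases lt_trichotomy d 0 with h | h | h
  · rw [Real.sign_of_neg h]; simp
  · simp [h, hs h]
  · rw [Real.sign_of_pos h]; simp

/-- Two-term Hölder inequality. -/
private lemma holder2 {p q : ℝ} (hpq : Real.HolderConjugate p q) (x y u v : ℝ) :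
    |x * u + y * v| ≤ (|x| ^ p + |y| ^ p) ^ (1 / p) * (|u| ^ q + |v| ^ q) ^ (1 / q) := by
  have key : ∀ x' y' : ℝ, x' * u + y' * v ≤
      (|x'| ^ p + |y'| ^ p) ^ (1 / p) * (|u| ^ q + |v| ^ q) ^ (1 / q) := by
    intro x' y'
    have := Real.inner_le_Lp_mul_Lq (Finset.univ : Finset (Fin 2))
      (fun i => if i = 0 then x' else y') (fun i => if i = 0 then u else v) hpq
    simpa [Fin.sum_univ_two] using this
  rcases le_or_gt 0 (x * u + y * v) with h | h
  · rw [abs_of_nonneg h]; exact key x y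
  · rw [abs_of_neg h]
    have h2 := key (-x) (-y)
    simp only [neg_mul, abs_neg] at h2
    linarith

/-- Distance formula in `ℓ_p²`: the distance from `(a,b)` to the line spanned
by `(c,d)` equals `|ad - bc| / (|c|^q + |d|^q)^(1/q)`. -/
theorem dist_lp2_point_to_line
    (p q : ℝ) (hp : 1 < p) (hpq : 1 / p + 1 / q = 1)
    (a b c d : ℝ) (hcd : (c, d) ≠ (0, 0)) :
    (⨅ t : ℝ, (|a - t * c| ^ p + |b - t * d| ^ p) ^ (1 / p)) =
      |a * d - b * c| / (|c| ^ q + |d| ^ q) ^ (1 / q) := by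
  have hconj : Real.HolderConjugate p q :=
    Real.holderConjugate_iff.mpr ⟨hp, by rw [← one_div, ← one_div]; exact hpq⟩
  have hq1 : 1 < q := hconj.symm.lt
  have hp0 : (0:ℝ) < p := by linarith
  have hq0 : (0:ℝ) < q := by linarith
  have hcd' : c ≠ 0 ∨ d ≠ 0 := by
    by_contra hcon
    push_neg at hcon
    exact hcd (by simp [hcon.1, hcon.2])
  have hS : 0 < |c| ^ q + |d| ^ q := by
    rcases hcd' with hc | hd
    · have h1 : (0:ℝ) < |c| ^ q := Real.rpow_pos_of_pos (abs_pos.mpr hc) q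
      have h2 : (0:ℝ) ≤ |d| ^ q := Real.rpow_nonneg (abs_nonneg d) q
      linarith
    · have h1 : (0:ℝ) < |d| ^ q := Real.rpow_pos_of_pos (abs_pos.mpr hd) q
      have h2 : (0:ℝ) ≤ |c| ^ q := Real.rpow_nonneg (abs_nonneg c) q
      linarith
  set S : ℝ := |c| ^ q + |d| ^ q with hSdef
  have hSq : 0 < S ^ (1 / q) := Real.rpow_pos_of_pos hS _
  apply le_antisymm
  · -- upper bound: evaluate at a minimizing t
    set lam : ℝ := (a * d - b * c) / S with hlam
    set x : ℝ := lam * Real.sign d * |d| ^ (q - 1) with hx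
    set y : ℝ := -(lam * Real.sign c * |c| ^ (q - 1)) with hy
    have habs : ∀ e : ℝ, |e| ^ (q - 1) * (Real.sign e * e) = |e| ^ q := by
      intro e
      rw [sign_mul_self_eq_abs]
      nth_rewrite 2 [← Real.rpow_one |e|]
      rw [← Real.rpow_add_of_nonneg (abs_nonneg e) (by linarith) zero_le_one]
      norm_num
    have hxd : x * d = lam * |d| ^ q := by
      calc x * d = lam * (|d| ^ (q - 1) * (Real.sign d * d)) := by rw [hx]; ring
        _ = lam * |d| ^ q := by rw [habs d]
    have hyc : y * c = -(lam * |c| ^ q) := by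
      calc y * c = -(lam * (|c| ^ (q - 1) * (Real.sign c * c))) := by rw [hy]; ring
        _ = -(lam * |c| ^ q) := by rw [habs c]
    have hlamS : lam * S = a * d - b * c := div_mul_cancel₀ _ hS.ne'
    have hdet : x * d - y * c = a * d - b * c := by
      rw [hxd, hyc]
      calc lam * |d| ^ q - -(lam * |c| ^ q) = lam * S := by rw [hSdef]; ring
        _ = a * d - b * c := hlamS
    -- find t with a - t*c = x and b - t*d = y
    have hexists : ∃ t : ℝ, a - t * c = x ∧ b - t * d = y := by
      rcases hcd' with hc | hd
      · refine ⟨(a - x) / c, by field_simp; ring, ?_⟩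
        have h1 : (b - y) * c = (a - x) * d := by nlinarith [hdet]
        field_simp
        nlinarith [h1]
      · refine ⟨(b - y) / d, ?_, by field_simp; ring⟩
        have h1 : (b - y) * c = (a - x) * d := by nlinarith [hdet]
        field_simp
        nlinarith [h1]
    obtain ⟨t, htx, hty⟩ := hexists
    have hbdd : BddBelow (Set.range fun t : ℝ =>
        (|a - t * c| ^ p + |b - t * d| ^ p) ^ (1 / p)) := by
      refine ⟨0, fun v hv => ?_⟩
      obtain ⟨s, rfl⟩ := hv
      positivity
    refine (ciInf_le hbdd t).trans_eq ?_
    rw [htx, hty]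
    -- compute (|x|^p + |y|^p)^(1/p)
    have hq1ne : q - 1 ≠ 0 := by linarith
    have habsx : |x| = |lam| * |d| ^ (q - 1) := by
      rw [hx, abs_mul, abs_mul, abs_of_nonneg (Real.rpow_nonneg (abs_nonneg d) _), mul_assoc]
      congr 1
      exact abs_sign_mul d _ (fun h => by simp [h, Real.zero_rpow hq1ne])
    have habsy : |y| = |lam| * |c| ^ (q - 1) := by
      rw [hy, abs_neg, abs_mul, abs_mul,
        abs_of_nonneg (Real.rpow_nonneg (abs_nonneg c) _), mul_assoc]
      congr 1
      exact abs_sign_mul c _ (fun h => by simp [h, Real.zero_rpow hq1ne])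
    have hq1p : (q - 1) * p = q := hconj.symm.sub_one_mul_conj
    have hpow : ∀ e : ℝ, (|lam| * |e| ^ (q - 1)) ^ p = |lam| ^ p * |e| ^ q := by
      intro e
      rw [Real.mul_rpow (abs_nonneg lam) (Real.rpow_nonneg (abs_nonneg e) _),
        ← Real.rpow_mul (abs_nonneg e), hq1p]
    have hsum : |x| ^ p + |y| ^ p = |lam| ^ p * S := by
      rw [habsx, habsy, hpow, hpow, hSdef]; ring
    rw [hsum, Real.mul_rpow (Real.rpow_nonneg (abs_nonneg lam) p) hS.le,
      ← Real.rpow_mul (abs_nonneg lam)]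
    have hpinv : p * (1 / p) = 1 := by field_simp
    rw [hpinv, Real.rpow_one]
    have hlamabs : |lam| = |a * d - b * c| / S := by
      rw [hlam, abs_div, abs_of_pos hS]
    rw [hlamabs, div_mul_eq_mul_div, div_eq_div_iff hS.ne' hSq.ne', mul_assoc]
    congr 1
    rw [← Real.rpow_add hS, hpq, Real.rpow_one]
  · -- lower bound
    refine le_ciInf fun t => ?_
    rw [div_le_iff₀ hSq]
    have key := holder2 hconj (a - t * c) (b - t * d) d (-c)
    have heq : (a - t * c) * d + (b - t * d) * (-c) = a * d - b * c := by ring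
    rw [heq, abs_neg, add_comm (|d| ^ q) (|c| ^ q)] at key
    exact key
end
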